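/- Let H be a real Hilbert space with two norms: the ambient norm ‖·‖ and a weaker seminorm |·|. Let B be a bilinear form on H, bounded with constant M and coercive with constant α with respect to ‖·‖. Let V_h ⊆ H be a closed subspace, and let e = u − u_h where B[e, w_h] = 0 for all w_h ∈ V_h. Suppose for the dual problem: for each e there is ψ ∈ H with B[w, ψ] = ⟨e, w⟩ (the pairing realizing |e|² = ⟨e,e⟩) for all w ∈ H, and inf_{ψ_h ∈ V_h} ‖ψ − ψ_h‖ ≤ δ(e)·|e|. Then |e|² ≤ M·δ(e)·|e|·‖e‖, hence |e| ≤ M·δ(e)·‖e‖. -/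

import Mathlib

/-! Galerkin orthogonality lets one subtract any `ψ_h ∈ V_h` from the dual solution:
`|e|² = ⟨e, e⟩ = B[e, ψ] = B[e, ψ - ψ_h] ≤ M ‖e‖ ‖ψ - ψ_h‖`. Taking the infimum over `ψ_h`
gives `|e|² ≤ M ‖e‖ δ |e|`, and dividing by `|e|` gives the second bound. -/

section AubinNitsche

variable {E : Type*} [SeminormedAddCommGroup E]

theorem mul_norm_nonneg_of_abs_le_mul_norm_mul_norm {B : E → E → ℝ} {M : ℝ}
    (hbdd : ∀ v w, |B v w| ≤ M * ‖v‖ * ‖w‖) (v : E) : 0 ≤ M * ‖v‖ := by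
  rcases (norm_nonneg v).eq_or_lt with hv | hv
  · simp [← hv]
  · exact nonneg_of_mul_nonneg_left ((abs_nonneg _).trans (hbdd v v)) hv

theorem Real.le_mul_iInf_of_forall_le_mul {ι : Type*} [Nonempty ι] {a c : ℝ} {f : ι → ℝ}
    (hc : 0 ≤ c) (h : ∀ i, a ≤ c * f i) : a ≤ c * ⨅ i, f i := by
  rw [Real.mul_iInf_of_nonneg hc]
  exact le_ciInf h

theorem apply_le_mul_norm_mul_iInf_norm_sub [Module ℝ E] (B : E →ₗ[ℝ] E →ₗ[ℝ] ℝ) {M : ℝ}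
    (hbdd : ∀ v w, |B v w| ≤ M * ‖v‖ * ‖w‖) (V : Submodule ℝ E) {e : E}
    (hGal : ∀ w ∈ V, B e w = 0) (ψ : E) :
    B e ψ ≤ M * ‖e‖ * ⨅ ψh : V, ‖ψ - (ψh : E)‖ := by
  refine Real.le_mul_iInf_of_forall_le_mul
    (mul_norm_nonneg_of_abs_le_mul_norm_mul_norm hbdd e) fun ψh => ?_
  calc B e ψ = B e (ψ - ψh) := by rw [map_sub, hGal ψh ψh.2, sub_zero]
    _ ≤ |B e (ψ - ψh)| := le_abs_self _
    _ ≤ M * ‖e‖ * ‖ψ - ψh‖ := hbdd _ _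

end AubinNitsche

theorem le_of_sq_le_mul {s x : ℝ} (hs : 0 ≤ s) (hx : 0 ≤ x) (h : s ^ 2 ≤ s * x) : s ≤ x := by
  rcases hs.eq_or_lt with rfl | hs
  · exact hx
  · exact le_of_mul_le_mul_left (by rwa [← sq]) hs

theorem aubin_nitsche_duality_general {H : Type*} [NormedAddCommGroup H]
    [InnerProductSpace ℝ H]
    (B : H →ₗ[ℝ] H →ₗ[ℝ] ℝ) (M : ℝ)
    (hbdd : ∀ v w : H, |B v w| ≤ M * ‖v‖ * ‖w‖)
    (sem : H → ℝ) (hsem : ∀ x : H, 0 ≤ sem x)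
    (P : H →ₗ[ℝ] H →ₗ[ℝ] ℝ)
    (Vh : Submodule ℝ H)
    (u uh : H)
    (hGal : ∀ wh ∈ Vh, B (u - uh) wh = 0)
    (ψ : H) (hdual : ∀ w : H, B w ψ = P (u - uh) w)
    (hpair : P (u - uh) (u - uh) = sem (u - uh) ^ 2)
    (δ : ℝ) (hδ : 0 ≤ δ)
    (happrox : ⨅ ψh : Vh, ‖ψ - (ψh : H)‖ ≤ δ * sem (u - uh)) :
    sem (u - uh) ^ 2 ≤ M * δ * sem (u - uh) * ‖u - uh‖ ∧
      sem (u - uh) ≤ M * δ * ‖u - uh‖ := by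
  set e := u - uh
  have hMe : 0 ≤ M * ‖e‖ := mul_norm_nonneg_of_abs_le_mul_norm_mul_norm hbdd e
  have hsq : sem e ^ 2 ≤ M * ‖e‖ * (δ * sem e) :=
    calc sem e ^ 2 = B e ψ := by rw [hdual, hpair]
      _ ≤ M * ‖e‖ * ⨅ ψh : Vh, ‖ψ - (ψh : H)‖ :=
        apply_le_mul_norm_mul_iInf_norm_sub B hbdd Vh hGal ψ
      _ ≤ M * ‖e‖ * (δ * sem e) := mul_le_mul_of_nonneg_left happrox hMe
  refine ⟨by linarith, le_of_sq_le_mul (hsem e) (by linarith [mul_nonneg hMe hδ]) (by linarith)⟩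

/-- Abstract Aubin–Nitsche duality argument: if `B` is bounded with constant
`M`, `e = u - u_h` satisfies Galerkin orthogonality, `ψ` solves the dual
problem `B[w, ψ] = ⟨e, w⟩` where the pairing realizes `|e|² = ⟨e, e⟩` for the
weaker seminorm `|·|`, and the dual solution is approximated to tolerance
`inf_{ψ_h ∈ V_h} ‖ψ - ψ_h‖ ≤ δ |e|`, then `|e|² ≤ M δ |e| ‖e‖`, hence
`|e| ≤ M δ ‖e‖`. -/
theorem aubin_nitsche_duality {H : Type*} [NormedAddCommGroup H]
    [InnerProductSpace ℝ H] [CompleteSpace H]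
    (B : H →ₗ[ℝ] H →ₗ[ℝ] ℝ) (M α : ℝ) (hα : 0 < α)
    (hbdd : ∀ v w : H, |B v w| ≤ M * ‖v‖ * ‖w‖)
    (hcoer : ∀ v : H, α * ‖v‖ ^ 2 ≤ B v v)
    (sem : H → ℝ) (hsem : ∀ x : H, 0 ≤ sem x)
    (P : H →ₗ[ℝ] H →ₗ[ℝ] ℝ)
    (Vh : Submodule ℝ H) (hVh : IsClosed (Vh : Set H))
    (u uh : H) (huh : uh ∈ Vh)
    (hGal : ∀ wh ∈ Vh, B (u - uh) wh = 0)
    (ψ : H) (hdual : ∀ w : H, B w ψ = P (u - uh) w)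
    (hpair : P (u - uh) (u - uh) = sem (u - uh) ^ 2)
    (δ : ℝ) (hδ : 0 ≤ δ)
    (happrox : ⨅ ψh : Vh, ‖ψ - (ψh : H)‖ ≤ δ * sem (u - uh)) :
    sem (u - uh) ^ 2 ≤ M * δ * sem (u - uh) * ‖u - uh‖ ∧
      sem (u - uh) ≤ M * δ * ‖u - uh‖ :=
  aubin_nitsche_duality_general B M hbdd sem hsem P Vh u uh hGal ψ hdual hpair δ hδ happrox
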